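/- arXiv:2010.08410 — 5 statements merged into one kernel-verified Lean document; each statement's English description precedes it below -/
import Mathlib

section
/- Suppose the noisy label distribution is obtained by uniform label flipping with noise level ρ ∈ [0,1]: the noisy conditional probabilities are η^ρ_y(x) = (1 − ρ) η_y(x) + ρ/C for every class y and every feature x (i.e., with probability ρ the label is replaced by a uniformly random label from Y). Then the Bayes error rate of the noisy distribution satisfies R*_ρ = R* + ρ (1 − 1/C − R*). -/
open MeasureTheory

/-- Uniform label flipping with noise level `ρ` increases the Bayes error rate
according to `R*_ρ = R* + ρ (1 − 1/C − R*)`. -/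
theorem ber_uniform_label_flipping
    {X : Type*} [MeasurableSpace X] (μ : Measure X) [IsProbabilityMeasure μ]
    {Y : Type*} [Fintype Y] [Nonempty Y]
    (hC : 2 ≤ Fintype.card Y)
    (η ηρ : X → Y → ℝ)
    (hmeas : ∀ y, Measurable fun x => η x y)
    (hnn : ∀ x y, 0 ≤ η x y)
    (hsum : ∀ x, ∑ y, η x y = 1)
    (ρ : ℝ) (hρ0 : 0 ≤ ρ) (hρ1 : ρ ≤ 1)
    (hnoise : ∀ x y, ηρ x y = (1 - ρ) * η x y + ρ / (Fintype.card Y : ℝ))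
    (Rstar Rρ : ℝ)
    (hR : Rstar = ∫ x, (1 - ⨆ y, η x y) ∂μ)
    (hRρ : Rρ = ∫ x, (1 - ⨆ y, ηρ x y) ∂μ) :
    Rρ = Rstar + ρ * (1 - 1 / (Fintype.card Y : ℝ) - Rstar) := by
  have hle1 : ∀ x y, η x y ≤ 1 := by
    intro x y
    calc η x y ≤ ∑ z, η x z := Finset.single_le_sum (fun z _ => hnn x z) (Finset.mem_univ y)
    _ = 1 := hsum x
  -- rewrite sup via Finset.sup'
  have hsup' : ∀ x, (⨆ y, η x y) = Finset.univ.sup' Finset.univ_nonempty (η x) := by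
    intro x; exact (Finset.sup'_univ_eq_ciSup (η x)).symm
  have hsupmeas : Measurable fun x => ⨆ y, η x y := by
    simp only [hsup']
    have h := Finset.measurable_sup' (s := (Finset.univ : Finset Y))
      Finset.univ_nonempty (fun y _ => hmeas y)
    have heq : (fun x => Finset.univ.sup' Finset.univ_nonempty (η x))
        = Finset.univ.sup' Finset.univ_nonempty (fun y x => η x y) := by
      funext x; simp [Finset.sup'_apply]
    rw [heq]; exact h
  have hsup_le : ∀ x, (⨆ y, η x y) ≤ 1 := by
    intro x; rw [hsup']
    exact Finset.sup'_le _ _ (fun y _ => hle1 x y)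
  have hsup_nn : ∀ x, 0 ≤ ⨆ y, η x y := by
    intro x; rw [hsup']
    obtain ⟨y⟩ := ‹Nonempty Y›
    exact le_trans (hnn x y) (Finset.le_sup' _ (Finset.mem_univ y))
  -- the noisy sup
  have hsupρ : ∀ x, (⨆ y, ηρ x y) = (1 - ρ) * (⨆ y, η x y) + ρ / (Fintype.card Y : ℝ) := by
    intro x
    have hmono : Monotone fun t : ℝ => (1 - ρ) * t + ρ / (Fintype.card Y : ℝ) := by
      intro a b hab
      have : 0 ≤ 1 - ρ := by linarith
      dsimp; nlinarith
    have hcont : ContinuousAt (fun t : ℝ => (1 - ρ) * t + ρ / (Fintype.card Y : ℝ))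
        (⨆ y, η x y) := by fun_prop
    have hbdd : BddAbove (Set.range (η x)) := Set.Finite.bddAbove (Set.finite_range _)
    have := hmono.map_ciSup_of_continuousAt hcont hbdd
    simp only [hnoise]
    exact this.symm
  -- integrand equality
  have hint_eq : ∀ x, (1 - ⨆ y, ηρ x y)
      = (1 - ρ) * (1 - ⨆ y, η x y) + ρ * (1 - 1 / (Fintype.card Y : ℝ)) := by
    intro x; rw [hsupρ x]; field_simp; ring
  -- integrability
  have hintg : Integrable (fun x => 1 - ⨆ y, η x y) μ := by
    refine (integrable_const (1 : ℝ)).mono' ?_ ?_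
    · exact (measurable_const.sub hsupmeas).aestronglyMeasurable
    · refine Filter.Eventually.of_forall fun x => ?_
      rw [Real.norm_eq_abs, abs_le]
      constructor
      · have := hsup_le x; linarith
      · have := hsup_nn x; linarith
  have : Rρ = (1 - ρ) * (∫ x, (1 - ⨆ y, η x y) ∂μ) + ρ * (1 - 1 / (Fintype.card Y : ℝ)) := by
    rw [hRρ]
    calc ∫ x, (1 - ⨆ y, ηρ x y) ∂μ
        = ∫ x, ((1 - ρ) * (1 - ⨆ y, η x y) + ρ * (1 - 1 / (Fintype.card Y : ℝ))) ∂μ := by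
          exact integral_congr_ae (Filter.Eventually.of_forall hint_eq)
      _ = (1 - ρ) * (∫ x, (1 - ⨆ y, η x y) ∂μ) + ρ * (1 - 1 / (Fintype.card Y : ℝ)) := by
          rw [integral_add (hintg.const_mul _) (integrable_const _),
            integral_const_mul, integral_const]
          simp
  rw [this, ← hR]; ring
end

section
/- Under the class-dependent label noise model, assume there is a measurable map x ↦ y_x such that for μ-almost every x, y_x maximizes y ↦ η_y(x) and y_x also maximizes ỹ ↦ η^ρ_{ỹ}(x). Then the Bayes error rate of the noisy distribution satisfies R*_ρ = R* + ∫ ρ(y_x) η_{y_x}(x) dμ(x) − ∫ ( ∑_{y ∈ Y, y ≠ y_x} t_{y_x, y} η_y(x) ) dμ(x). -/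
open MeasureTheory

lemma meas_comp_aux {X Y : Type*} [MeasurableSpace X] [Fintype Y] [DecidableEq Y]
    [MeasurableSpace Y] [MeasurableSingletonClass Y]
    (F : X → Y → ℝ) (hF : ∀ y, Measurable fun x => F x y)
    (yx : X → Y) (hyx : Measurable yx) :
    Measurable fun x => F x (yx x) := by
  have h : (fun x => F x (yx x)) = fun x => ∑ y, if yx x = y then F x y else 0 := by
    funext x; simp
  rw [h]
  exact Finset.measurable_sum _ fun y _ =>
    Measurable.ite (hyx (measurableSet_singleton y)) (hF y) measurable_const

/-- Under class-dependent label noise with transition matrix `t`, if the Bayes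
label `y_x` is preserved by the noise, then
`R*_ρ = R* + ∫ ρ(y_x) η_{y_x}(x) dμ − ∫ ∑_{y ≠ y_x} t_{y_x,y} η_y(x) dμ`. -/
theorem ber_class_dependent_noise
    {X : Type*} [MeasurableSpace X] (μ : Measure X) [IsProbabilityMeasure μ]
    {Y : Type*} [Fintype Y] [Nonempty Y] [DecidableEq Y] [MeasurableSpace Y] [MeasurableSingletonClass Y]
    (hC : 2 ≤ Fintype.card Y)
    (η : X → Y → ℝ)
    (hmeas : ∀ y, Measurable fun x => η x y)
    (hnn : ∀ x y, 0 ≤ η x y)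
    (hsum : ∀ x, ∑ y, η x y = 1)
    (t : Y → Y → ℝ)
    (ht0 : ∀ y' y, 0 ≤ t y' y) (ht1 : ∀ y' y, t y' y ≤ 1)
    (htsum : ∀ y, ∑ y', t y' y = 1)
    (ηρ : X → Y → ℝ)
    (hηρ : ∀ x y', ηρ x y' = ∑ y, t y' y * η x y)
    (yx : X → Y) (hyx : Measurable yx)
    (hmax : ∀ᵐ x ∂μ, (∀ y, η x y ≤ η x (yx x)) ∧ ∀ y', ηρ x y' ≤ ηρ x (yx x))
    (Rstar Rρ : ℝ)
    (hR : Rstar = ∫ x, (1 - ⨆ y, η x y) ∂μ)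
    (hRρ : Rρ = ∫ x, (1 - ⨆ y', ηρ x y') ∂μ) :
    Rρ = Rstar + (∫ x, (1 - t (yx x) (yx x)) * η x (yx x) ∂μ)
          - ∫ x, ∑ y ∈ Finset.univ.erase (yx x), t (yx x) y * η x y ∂μ := by
  -- basic bounds
  have hle1 : ∀ x y, η x y ≤ 1 := by
    intro x y
    calc η x y ≤ ∑ y', η x y' :=
          Finset.single_le_sum (fun y' _ => hnn x y') (Finset.mem_univ y)
      _ = 1 := hsum x
  set g1 : X → ℝ := fun x => 1 - η x (yx x) with hg1
  set g2 : X → ℝ := fun x => (1 - t (yx x) (yx x)) * η x (yx x) with hg2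
  set g3 : X → ℝ := fun x => ∑ y ∈ Finset.univ.erase (yx x), t (yx x) y * η x y with hg3
  -- measurability
  have hmη : Measurable fun x => η x (yx x) :=
    meas_comp_aux η hmeas yx hyx
  have hmg1 : Measurable g1 := measurable_const.sub hmη
  have hmt : Measurable fun x => t (yx x) (yx x) :=
    meas_comp_aux (fun _ y => t y y) (fun y => measurable_const) yx hyx
  have hmg2 : Measurable g2 := (measurable_const.sub hmt).mul hmη
  have hmfull : Measurable fun x => ∑ y, t (yx x) y * η x y := by
    have := meas_comp_aux (fun x y' => ∑ y, t y' y * η x y)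
      (fun y' => Finset.measurable_sum _ fun y _ => (hmeas y).const_mul _) yx hyx
    exact this
  have hmg3 : Measurable g3 := by
    have h : g3 = fun x => (∑ y, t (yx x) y * η x y) - t (yx x) (yx x) * η x (yx x) := by
      funext x
      rw [hg3]
      rw [← Finset.add_sum_erase Finset.univ (fun y => t (yx x) y * η x y) (Finset.mem_univ (yx x))]
      ring
    rw [h]
    exact hmfull.sub (hmt.mul hmη)
  -- integrability
  have hint : ∀ (g : X → ℝ), Measurable g → (∀ x, |g x| ≤ 1) → Integrable g μ := by
    intro g hg hb
    exact Integrable.mono' (integrable_const 1) hg.aestronglyMeasurable (ae_of_all μ hb)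
  have hig1 : Integrable g1 μ := by
    refine hint g1 hmg1 fun x => ?_
    simp only [hg1]
    rw [abs_le]
    constructor <;> [nlinarith [hle1 x (yx x)]; nlinarith [hnn x (yx x)]]
  have hig2 : Integrable g2 μ := by
    refine hint g2 hmg2 fun x => ?_
    simp only [hg2]
    rw [abs_le]
    constructor <;>
      nlinarith [hnn x (yx x), hle1 x (yx x), ht0 (yx x) (yx x), ht1 (yx x) (yx x)]
  have hg3nn : ∀ x, 0 ≤ g3 x := fun x =>
    Finset.sum_nonneg fun y _ => mul_nonneg (ht0 _ _) (hnn _ _)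
  have hig3 : Integrable g3 μ := by
    refine hint g3 hmg3 fun x => ?_
    rw [abs_le]
    refine ⟨by linarith [hg3nn x], ?_⟩
    calc g3 x ≤ ∑ y ∈ Finset.univ.erase (yx x), η x y := by
          refine Finset.sum_le_sum fun y _ => ?_
          nlinarith [ht0 (yx x) y, ht1 (yx x) y, hnn x y]
      _ ≤ ∑ y, η x y := Finset.sum_le_sum_of_subset_of_nonneg
          (Finset.erase_subset _ _) (fun y _ _ => hnn x y)
      _ = 1 := hsum x
  -- a.e. identities
  have hae1 : (fun x => 1 - ⨆ y, η x y) =ᵐ[μ] g1 := by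
    filter_upwards [hmax] with x hx
    have : (⨆ y, η x y) = η x (yx x) :=
      le_antisymm (ciSup_le hx.1) (le_ciSup (Set.Finite.bddAbove (Set.finite_range _)) (yx x))
    rw [this]
  have hae2 : (fun x => 1 - ⨆ y', ηρ x y') =ᵐ[μ] fun x => g1 x + g2 x - g3 x := by
    filter_upwards [hmax] with x hx
    have hsup : (⨆ y', ηρ x y') = ηρ x (yx x) :=
      le_antisymm (ciSup_le hx.2) (le_ciSup (Set.Finite.bddAbove (Set.finite_range _)) (yx x))
    have hsplit : ηρ x (yx x) = t (yx x) (yx x) * η x (yx x) + g3 x := by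
      rw [hηρ, hg3,
        ← Finset.add_sum_erase Finset.univ (fun y => t (yx x) y * η x y) (Finset.mem_univ (yx x))]
    simp only [hsup, hsplit, hg1, hg2]
    ring
  have h12 : Integrable (fun x => g1 x + g2 x) μ := hig1.add hig2
  rw [hRρ, hR, integral_congr_ae hae1, integral_congr_ae hae2,
    integral_sub h12 hig3, integral_add hig1 hig2]
end

section
/- Under the class-dependent label noise model, assume there is a measurable map x ↦ y_x such that for μ-almost every x, y_x maximizes y ↦ η_y(x) and y_x also maximizes ỹ ↦ η^ρ_{ỹ}(x). Then the Bayes error rate of the noisy distribution satisfies the lower bound R*_ρ ≥ R* + (1 − R*) · min_{y∈Y} ρ(y) − R* · max_{y', y'' ∈ Y, y' ≠ y''} t_{y', y''}. -/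
/-!
At a.e. `x` the same label `b` is Bayes-optimal for the clean and the noisy distribution, so both
Bayes errors are integrals of `1 - η_b(x)` and `1 - η^ρ_b(x)`. Splitting `η^ρ_b(x) = ∑_y t_{b,y} η_y(x)`
into its diagonal term, at most `(1 - min ρ) η_b(x)`, and its off-diagonal terms, at most
`(max t_{y',y''}) (1 - η_b(x))`, gives a pointwise affine bound of `max η^ρ` by `max η`, which
integrates to the claim.
-/

open MeasureTheory Matrix Finset

namespace Matrix

variable {R n : Type*} [Fintype n] [DecidableEq n]

lemma mulVec_mem_stdSimplex [Semiring R] [PartialOrder R] [IsOrderedRing R]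
    {M : Matrix n n R} {x : n → R} (hM : M ∈ colStochastic R n) (hx : x ∈ stdSimplex R n) :
    M *ᵥ x ∈ stdSimplex R n :=
  ⟨nonneg_mulVec_of_mem_colStochastic hM hx.1, (sum_mulVec_of_mem_colStochastic hM).trans hx.2⟩

lemma mulVec_apply_le_of_offDiag_le [CommRing R] [PartialOrder R] [IsOrderedRing R]
    {M : Matrix n n R} {x : n → R} (hx : x ∈ stdSimplex R n) {b : n} {T : R}
    (hT : ∀ y, b ≠ y → M b y ≤ T) :
    (M *ᵥ x) b ≤ M b b * x b + T * (1 - x b) :=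
  calc (M *ᵥ x) b = M b b * x b + ∑ y ∈ univ.erase b, M b y * x y :=
        (add_sum_erase _ _ (mem_univ b)).symm
    _ ≤ M b b * x b + ∑ y ∈ univ.erase b, T * x y := by
        gcongr with y hy
        · exact hx.1 y
        · exact hT y (ne_of_mem_erase hy).symm
    _ = M b b * x b + T * (1 - x b) := by
        rw [← mul_sum, sum_erase_eq_sub (mem_univ b), hx.2]

lemma iSup_mulVec_le_of_isMax {M : Matrix n n ℝ} {x : n → ℝ} (hx : x ∈ stdSimplex ℝ n) {b : n}
    (hx_max : ∀ y, x y ≤ x b) (hMx_max : ∀ y, (M *ᵥ x) y ≤ (M *ᵥ x) b) {m T : ℝ}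
    (hm : m ≤ 1 - M b b) (hT : ∀ y, b ≠ y → M b y ≤ T) :
    ⨆ y, (M *ᵥ x) y ≤ (1 - m - T) * (⨆ y, x y) + T := by
  have : Nonempty n := ⟨b⟩
  rw [ciSup_eq_of_forall_le_of_forall_lt_exists_gt hx_max fun _ hw => ⟨b, hw⟩,
    ciSup_eq_of_forall_le_of_forall_lt_exists_gt hMx_max fun _ hw => ⟨b, hw⟩]
  calc (M *ᵥ x) b ≤ M b b * x b + T * (1 - x b) := mulVec_apply_le_of_offDiag_le hx hT
    _ ≤ (1 - m) * x b + T * (1 - x b) := by gcongr; exacts [hx.1 b, by linarith]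
    _ = (1 - m - T) * x b + T := by ring

end Matrix

lemma integrable_iSup_of_mem_stdSimplex {X Y : Type*} [MeasurableSpace X] {μ : Measure X}
    [IsFiniteMeasure μ] [Fintype Y] {p : X → Y → ℝ} (hmeas : ∀ y, Measurable fun x => p x y)
    (hp : ∀ x, p x ∈ stdSimplex ℝ Y) :
    Integrable (fun x => ⨆ y, p x y) μ := by
  refine (integrable_const (1 : ℝ)).mono' (Measurable.iSup hmeas).aestronglyMeasurable
    (ae_of_all _ fun x => ?_)
  rw [Real.norm_of_nonneg (Real.iSup_nonneg (hp x).1)]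
  exact Real.iSup_le (fun y => (mem_Icc_of_mem_stdSimplex (hp x) y).2) zero_le_one

lemma integral_one_sub {X : Type*} [MeasurableSpace X] {μ : Measure X} [IsProbabilityMeasure μ]
    {f : X → ℝ} (hf : Integrable f μ) :
    ∫ x, (1 - f x) ∂μ = 1 - ∫ x, f x ∂μ := by
  rw [integral_sub (integrable_const 1) hf, integral_const, probReal_univ, one_smul]

theorem ber_class_dependent_noise_lower_bound_general
    {X : Type*} [MeasurableSpace X] (μ : Measure X) [IsProbabilityMeasure μ]
    {Y : Type*} [Fintype Y] [Nonempty Y] [DecidableEq Y]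
    (hne : ((Finset.univ : Finset (Y × Y)).filter fun p => p.1 ≠ p.2).Nonempty)
    (η : X → Y → ℝ)
    (hmeas : ∀ y, Measurable fun x => η x y)
    (hnn : ∀ x y, 0 ≤ η x y)
    (hsum : ∀ x, ∑ y, η x y = 1)
    (t : Y → Y → ℝ)
    (ht0 : ∀ y' y, 0 ≤ t y' y)
    (htsum : ∀ y, ∑ y', t y' y = 1)
    (ηρ : X → Y → ℝ)
    (hηρ : ∀ x y', ηρ x y' = ∑ y, t y' y * η x y)
    (yx : X → Y)
    (hmax : ∀ᵐ x ∂μ, (∀ y, η x y ≤ η x (yx x)) ∧ ∀ y', ηρ x y' ≤ ηρ x (yx x))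
    (Rstar Rρ : ℝ)
    (hR : Rstar = ∫ x, (1 - ⨆ y, η x y) ∂μ)
    (hRρ : Rρ = ∫ x, (1 - ⨆ y', ηρ x y') ∂μ) :
    Rρ ≥ Rstar
          + (1 - Rstar) * (Finset.univ.inf' Finset.univ_nonempty fun y => 1 - t y y)
          - Rstar * (((Finset.univ : Finset (Y × Y)).filter fun p => p.1 ≠ p.2).sup' hne
              fun p => t p.1 p.2) := by
  set m := univ.inf' univ_nonempty fun y => 1 - t y y
  set T := (univ.filter fun p : Y × Y => p.1 ≠ p.2).sup' hne fun p => t p.1 p.2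
  have hη : ∀ x, η x ∈ stdSimplex ℝ Y := fun x => ⟨hnn x, hsum x⟩
  have hηρ_mulVec : ∀ x, ηρ x = of t *ᵥ η x := fun x => funext (hηρ x)
  have ht : of t ∈ colStochastic ℝ Y := mem_colStochastic_iff_sum.2 ⟨ht0, htsum⟩
  have hpt : ∀ᵐ x ∂μ, ⨆ y', ηρ x y' ≤ (1 - m - T) * (⨆ y, η x y) + T := by
    filter_upwards [hmax] with x ⟨hη_max, hηρ_max⟩
    rw [hηρ_mulVec] at hηρ_max ⊢
    exact iSup_mulVec_le_of_isMax (hη x) hη_max hηρ_max (inf'_le _ (mem_univ _)) fun y h =>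
      le_sup' (fun p : Y × Y => t p.1 p.2) (b := (yx x, y)) (mem_filter.2 ⟨mem_univ _, h⟩)
  have hint := integrable_iSup_of_mem_stdSimplex (μ := μ) hmeas hη
  have hintρ : Integrable (fun x => ⨆ y', ηρ x y') μ :=
    integrable_iSup_of_mem_stdSimplex (fun y' => by simp_rw [hηρ]; fun_prop)
      fun x => hηρ_mulVec x ▸ mulVec_mem_stdSimplex ht (hη x)
  have hmono := integral_mono_ae (g := fun x => (1 - m - T) * (⨆ y, η x y) + T) hintρ
    ((hint.const_mul _).add (integrable_const T)) hpt
  rw [integral_add (hint.const_mul _) (integrable_const T), integral_const_mul, integral_const,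
    probReal_univ, one_smul] at hmono
  rw [hR, hRρ, integral_one_sub hint, integral_one_sub hintρ]
  linarith

/-- Lower bound on the Bayes error rate under class-dependent label noise:
`R*_ρ ≥ R* + (1 − R*)·min_y ρ(y) − R*·max_{y'≠y''} t_{y',y''}`. -/
theorem ber_class_dependent_noise_lower_bound
    {X : Type*} [MeasurableSpace X] (μ : Measure X) [IsProbabilityMeasure μ]
    {Y : Type*} [Fintype Y] [Nonempty Y] [DecidableEq Y] [MeasurableSpace Y] [MeasurableSingletonClass Y]
    (hC : 2 ≤ Fintype.card Y)
    (hne : ((Finset.univ : Finset (Y × Y)).filter fun p => p.1 ≠ p.2).Nonempty)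
    (η : X → Y → ℝ)
    (hmeas : ∀ y, Measurable fun x => η x y)
    (hnn : ∀ x y, 0 ≤ η x y)
    (hsum : ∀ x, ∑ y, η x y = 1)
    (t : Y → Y → ℝ)
    (ht0 : ∀ y' y, 0 ≤ t y' y) (ht1 : ∀ y' y, t y' y ≤ 1)
    (htsum : ∀ y, ∑ y', t y' y = 1)
    (ηρ : X → Y → ℝ)
    (hηρ : ∀ x y', ηρ x y' = ∑ y, t y' y * η x y)
    (yx : X → Y) (hyx : Measurable yx)
    (hmax : ∀ᵐ x ∂μ, (∀ y, η x y ≤ η x (yx x)) ∧ ∀ y', ηρ x y' ≤ ηρ x (yx x))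
    (Rstar Rρ : ℝ)
    (hR : Rstar = ∫ x, (1 - ⨆ y, η x y) ∂μ)
    (hRρ : Rρ = ∫ x, (1 - ⨆ y', ηρ x y') ∂μ) :
    Rρ ≥ Rstar
          + (1 - Rstar) * (Finset.univ.inf' Finset.univ_nonempty fun y => 1 - t y y)
          - Rstar * (((Finset.univ : Finset (Y × Y)).filter fun p => p.1 ≠ p.2).sup' hne
              fun p => t p.1 p.2) :=
  ber_class_dependent_noise_lower_bound_general μ hne η hmeas hnn hsum t ht0 htsum ηρ hηρ yx hmax
    Rstar Rρ hR hRρ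
end

section
/- Under the class-dependent label noise model, assume there is a measurable map x ↦ y_x such that for μ-almost every x, y_x maximizes y ↦ η_y(x) and y_x also maximizes ỹ ↦ η^ρ_{ỹ}(x). Then the Bayes error rate of the noisy distribution satisfies the upper bound R*_ρ ≤ R* + (1 − R*) · max_{y∈Y} ρ(y) − R* · min_{y', y'' ∈ Y, y' ≠ y''} t_{y', y''}. -/
open MeasureTheory

/-- Auxiliary: composing a measurable selection with a family of measurable functions. -/
lemma meas_select {X Y : Type*} [MeasurableSpace X] [Fintype Y] [DecidableEq Y]
    [MeasurableSpace Y] [MeasurableSingletonClass Y]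
    (yx : X → Y) (hyx : Measurable yx) (h : Y → X → ℝ) (hh : ∀ y, Measurable (h y)) :
    Measurable fun x => h (yx x) x := by
  have heq : (fun x => h (yx x) x) = fun x => ∑ y, if yx x = y then h y x else 0 := by
    funext x; simp [Finset.sum_ite_eq]
  rw [heq]
  refine Finset.measurable_sum _ fun y _ => Measurable.ite ?_ (hh y) measurable_const
  exact hyx (measurableSet_singleton y)

/-- Upper bound on the Bayes error rate under class-dependent label noise:
`R*_ρ ≤ R* + (1 − R*)·max_y ρ(y) − R*·min_{y'≠y''} t_{y',y''}`. -/
theorem ber_class_dependent_noise_upper_bound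
    {X : Type*} [MeasurableSpace X] (μ : Measure X) [IsProbabilityMeasure μ]
    {Y : Type*} [Fintype Y] [Nonempty Y] [DecidableEq Y] [MeasurableSpace Y] [MeasurableSingletonClass Y]
    (hC : 2 ≤ Fintype.card Y)
    (hne : ((Finset.univ : Finset (Y × Y)).filter fun p => p.1 ≠ p.2).Nonempty)
    (η : X → Y → ℝ)
    (hmeas : ∀ y, Measurable fun x => η x y)
    (hnn : ∀ x y, 0 ≤ η x y)
    (hsum : ∀ x, ∑ y, η x y = 1)
    (t : Y → Y → ℝ)
    (ht0 : ∀ y' y, 0 ≤ t y' y) (ht1 : ∀ y' y, t y' y ≤ 1)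
    (htsum : ∀ y, ∑ y', t y' y = 1)
    (ηρ : X → Y → ℝ)
    (hηρ : ∀ x y', ηρ x y' = ∑ y, t y' y * η x y)
    (yx : X → Y) (hyx : Measurable yx)
    (hmax : ∀ᵐ x ∂μ, (∀ y, η x y ≤ η x (yx x)) ∧ ∀ y', ηρ x y' ≤ ηρ x (yx x))
    (Rstar Rρ : ℝ)
    (hR : Rstar = ∫ x, (1 - ⨆ y, η x y) ∂μ)
    (hRρ : Rρ = ∫ x, (1 - ⨆ y', ηρ x y') ∂μ) :
    Rρ ≤ Rstar
          + (1 - Rstar) * (Finset.univ.sup' Finset.univ_nonempty fun y => 1 - t y y)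
          - Rstar * (((Finset.univ : Finset (Y × Y)).filter fun p => p.1 ≠ p.2).inf' hne
              fun p => t p.1 p.2) := by
  classical
  set ρmax : ℝ := Finset.univ.sup' Finset.univ_nonempty fun y => 1 - t y y with hρmaxdef
  set tmin : ℝ := ((Finset.univ : Finset (Y × Y)).filter fun p => p.1 ≠ p.2).inf' hne
    (fun p => t p.1 p.2) with htmindef
  set m : X → ℝ := fun x => η x (yx x) with hmdef
  set g : X → ℝ := fun x => ηρ x (yx x) with hgdef
  -- basic bounds on η
  have hη1 : ∀ x y, η x y ≤ 1 := by
    intro x y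
    calc η x y ≤ ∑ y', η x y' :=
      Finset.single_le_sum (fun y' _ => hnn x y') (Finset.mem_univ y)
    _ = 1 := hsum x
  -- basic bounds on ηρ
  have hηρ0 : ∀ x y', 0 ≤ ηρ x y' := by
    intro x y'
    rw [hηρ]
    exact Finset.sum_nonneg fun y _ => mul_nonneg (ht0 y' y) (hnn x y)
  have hηρsum : ∀ x, ∑ y', ηρ x y' = 1 := by
    intro x
    simp only [hηρ]
    rw [Finset.sum_comm]
    calc ∑ y, ∑ y', t y' y * η x y = ∑ y, (∑ y', t y' y) * η x y := by
          simp [Finset.sum_mul]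
    _ = ∑ y, η x y := by simp [htsum]
    _ = 1 := hsum x
  have hηρ1 : ∀ x y', ηρ x y' ≤ 1 := by
    intro x y'
    calc ηρ x y' ≤ ∑ y'', ηρ x y'' :=
      Finset.single_le_sum (fun y'' _ => hηρ0 x y'') (Finset.mem_univ y')
    _ = 1 := hηρsum x
  -- measurability
  have hmmeas : Measurable m := meas_select yx hyx (fun y x => η x y) hmeas
  have hηρmeas : ∀ y', Measurable fun x => ηρ x y' := by
    intro y'
    have : (fun x => ηρ x y') = fun x => ∑ y, t y' y * η x y := by
      funext x; exact hηρ x y'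
    rw [this]
    exact Finset.measurable_sum _ fun y _ => (hmeas y).const_mul _
  have hgmeas : Measurable g := meas_select yx hyx (fun y x => ηρ x y) hηρmeas
  -- integrability
  have int_of_bdd : ∀ (f : X → ℝ), Measurable f → (∀ x, 0 ≤ f x) → (∀ x, f x ≤ 1) →
      Integrable f μ := by
    intro f hf h0 h1
    refine ⟨hf.aestronglyMeasurable, HasFiniteIntegral.of_bounded (C := 1) ?_⟩
    filter_upwards with x
    rw [Real.norm_eq_abs, abs_of_nonneg (h0 x)]
    exact h1 x
  have int_m : Integrable m μ := int_of_bdd m hmmeas (fun x => hnn x _) (fun x => hη1 x _)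
  have int_g : Integrable g μ := int_of_bdd g hgmeas (fun x => hηρ0 x _) (fun x => hηρ1 x _)
  have int_1m : Integrable (fun x => 1 - m x) μ := (integrable_const 1).sub int_m
  have int_1g : Integrable (fun x => 1 - g x) μ := (integrable_const 1).sub int_g
  -- identify Rstar and Rρ
  have hRm : Rstar = ∫ x, (1 - m x) ∂μ := by
    rw [hR]
    refine integral_congr_ae ?_
    filter_upwards [hmax] with x hx
    have : (⨆ y, η x y) = m x :=
      le_antisymm (ciSup_le hx.1) (le_ciSup (Set.Finite.bddAbove (Set.finite_range _)) (yx x))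
    rw [this]
  have hRg : Rρ = ∫ x, (1 - g x) ∂μ := by
    rw [hRρ]
    refine integral_congr_ae ?_
    filter_upwards [hmax] with x hx
    have : (⨆ y', ηρ x y') = g x :=
      le_antisymm (ciSup_le hx.2) (le_ciSup (Set.Finite.bddAbove (Set.finite_range _)) (yx x))
    rw [this]
  -- pointwise key inequality
  have key : ∀ x, 1 - g x ≤ ρmax + (1 - tmin - ρmax) * (1 - m x) := by
    intro x
    have hsplit : g x = t (yx x) (yx x) * m x +
        ∑ y ∈ Finset.univ.erase (yx x), t (yx x) y * η x y := by
      rw [hgdef]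
      simp only [hηρ]
      rw [← Finset.add_sum_erase _ _ (Finset.mem_univ (yx x))]
    have hrest : ∑ y ∈ Finset.univ.erase (yx x), η x y = 1 - m x := by
      have h0 : η x (yx x) + ∑ y ∈ Finset.univ.erase (yx x), η x y = ∑ y, η x y :=
        Finset.add_sum_erase Finset.univ (fun y => η x y) (Finset.mem_univ (yx x))
      have h1 := hsum x
      simp only [hmdef]
      linarith
    have h1 : (1 - ρmax) * m x ≤ t (yx x) (yx x) * m x := by
      have : 1 - t (yx x) (yx x) ≤ ρmax :=
        Finset.le_sup' (fun y => 1 - t y y) (Finset.mem_univ (yx x))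
      exact mul_le_mul_of_nonneg_right (by linarith) (hnn x (yx x))
    have h2 : tmin * (1 - m x) ≤ ∑ y ∈ Finset.univ.erase (yx x), t (yx x) y * η x y := by
      rw [← hrest, Finset.mul_sum]
      refine Finset.sum_le_sum fun y hy => ?_
      have hyne : y ≠ yx x := Finset.ne_of_mem_erase hy
      have : tmin ≤ t (yx x) y := by
        refine Finset.inf'_le (b := (yx x, y)) _ ?_
        simp only [Finset.mem_filter, Finset.mem_univ, true_and]
        exact fun h => hyne (h.symm)
      exact mul_le_mul_of_nonneg_right this (hnn x y)
    have hg_lb : (1 - ρmax) * m x + tmin * (1 - m x) ≤ g x := by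
      rw [hsplit]; linarith
    nlinarith [hg_lb]
  -- integrate
  have hint : ∫ x, (1 - g x) ∂μ ≤ ∫ x, (ρmax + (1 - tmin - ρmax) * (1 - m x)) ∂μ := by
    refine integral_mono int_1g ?_ key
    exact (integrable_const ρmax).add (int_1m.const_mul _)
  have hval : ∫ x, (ρmax + (1 - tmin - ρmax) * (1 - m x)) ∂μ
      = ρmax + (1 - tmin - ρmax) * Rstar := by
    rw [integral_add (integrable_const ρmax) (int_1m.const_mul _), integral_const,
      integral_const_mul, ← hRm]
    simp
  rw [hRg]
  calc ∫ x, (1 - g x) ∂μ ≤ ρmax + (1 - tmin - ρmax) * Rstar := by rw [← hval]; exact hint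
  _ = Rstar + (1 - Rstar) * ρmax - Rstar * tmin := by ring
end

section
/- Under the class-dependent label noise model, assume there is a measurable map x ↦ y_x such that for μ-almost every x, y_x maximizes y ↦ η_y(x) and y_x also maximizes ỹ ↦ η^ρ_{ỹ}(x). Let s ∈ [0,1] satisfy R* ≤ s (s is the error of a state-of-the-art model on the clean distribution). Then the Bayes error rate of the noisy distribution satisfies (1 − s) · min_{y∈Y} ρ(y) − s · max_{y', y'' ∈ Y, y' ≠ y''} t_{y', y''} ≤ R*_ρ ≤ s + max_{y∈Y} ρ(y). -/
/-!
Let `y₀ = y_x` be the common maximiser, so that the clean and noisy Bayes errors at `x` are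
`1 - η_{y₀}(x)` and `1 - ∑_y t_{y₀,y} η_y(x)`. Keeping only the diagonal term of the noisy sum gives
`1 - η^ρ_{y₀} ≤ (1 - η_{y₀}) + ρ(y₀)`, while bounding every off-diagonal `t_{y₀,y}` by their maximum
`T` gives `1 - η^ρ_{y₀} ≥ ρ(y₀) + (1 - T - ρ(y₀))(1 - η_{y₀})`. Both bounds are affine in the clean
error, so integrating them turns `1 - η_{y₀}` into `R*`, and `R* ≤ s` finishes the argument.
-/

open MeasureTheory Finset

theorem ciSup_eq_apply_of_forall_le {ι α : Type*} [ConditionallyCompleteLattice α] {f : ι → α}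
    {i₀ : ι} (h : ∀ i, f i ≤ f i₀) : ⨆ i, f i = f i₀ :=
  have : Nonempty ι := ⟨i₀⟩
  le_antisymm (ciSup_le h) (le_ciSup ⟨f i₀, Set.forall_mem_range.2 h⟩ i₀)

section ProbabilityVector

variable {Y : Type*} [Fintype Y]

theorem le_one_of_sum_eq_one {p : Y → ℝ} (hp : ∀ y, 0 ≤ p y) (hsum : ∑ y, p y = 1) (y : Y) :
    p y ≤ 1 :=
  hsum ▸ single_le_sum (fun i _ => hp i) (mem_univ y)

theorem sum_sum_mul_eq_one {t : Y → Y → ℝ} {p : Y → ℝ} (ht : ∀ y, ∑ y', t y' y = 1)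
    (hsum : ∑ y, p y = 1) : ∑ y', ∑ y, t y' y * p y = 1 := by
  rw [sum_comm]
  simp only [← sum_mul, ht, one_mul, hsum]

theorem one_sub_sum_mul_le {r p : Y → ℝ} {y₀ : Y} {ρ : ℝ} (hr : ∀ y, 0 ≤ r y) (hp : ∀ y, 0 ≤ p y)
    (hp₁ : p y₀ ≤ 1) (hr₁ : r y₀ ≤ 1) (hρ : 1 - r y₀ ≤ ρ) :
    1 - ∑ y, r y * p y ≤ (1 - p y₀) + ρ := by
  have hdiag : r y₀ * p y₀ ≤ ∑ y, r y * p y :=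
    single_le_sum (f := fun y => r y * p y) (fun y _ => mul_nonneg (hr y) (hp y)) (mem_univ y₀)
  nlinarith [mul_le_mul_of_nonneg_left hp₁ (sub_nonneg.2 hr₁)]

theorem le_one_sub_sum_mul [DecidableEq Y] {r p : Y → ℝ} {y₀ : Y} {ρ T : ℝ}
    (hp : ∀ y, 0 ≤ p y) (hsum : ∑ y, p y = 1) (hT : ∀ y ≠ y₀, r y ≤ T) (hρ : ρ ≤ 1 - r y₀) :
    ρ + (1 - T - ρ) * (1 - p y₀) ≤ 1 - ∑ y, r y * p y := by
  have hrest : ∑ y ∈ univ.erase y₀, r y * p y ≤ T * (1 - p y₀) := calc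
    ∑ y ∈ univ.erase y₀, r y * p y ≤ ∑ y ∈ univ.erase y₀, T * p y :=
      sum_le_sum fun y hy => mul_le_mul_of_nonneg_right (hT y (ne_of_mem_erase hy)) (hp y)
    _ = T * (1 - p y₀) := by
      rw [← mul_sum, ← hsum, ← add_sum_erase _ _ (mem_univ y₀), add_sub_cancel_left]
  rw [← add_sum_erase _ _ (mem_univ y₀)]
  nlinarith [mul_le_mul_of_nonneg_right hρ (hp y₀)]

theorem one_sub_iSup_noisy_bounds [DecidableEq Y] {p : Y → ℝ} {t : Y → Y → ℝ} {y₀ : Y}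
    {ρmin ρmax T : ℝ} (hp : ∀ y, 0 ≤ p y) (hsum : ∑ y, p y = 1) (ht0 : ∀ y' y, 0 ≤ t y' y)
    (ht1 : ∀ y, t y y ≤ 1) (hρmin : ∀ y, ρmin ≤ 1 - t y y) (hρmax : ∀ y, 1 - t y y ≤ ρmax)
    (hT : ∀ y' y, y' ≠ y → t y' y ≤ T) (hp₀ : ∀ y, p y ≤ p y₀)
    (hq₀ : ∀ y', ∑ y, t y' y * p y ≤ ∑ y, t y₀ y * p y) :
    1 - ⨆ y', ∑ y, t y' y * p y ≤ (1 - ⨆ y, p y) + ρmax ∧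
      ρmin + (1 - T - ρmin) * (1 - ⨆ y, p y) ≤ 1 - ⨆ y', ∑ y, t y' y * p y := by
  rw [ciSup_eq_apply_of_forall_le hp₀, ciSup_eq_apply_of_forall_le hq₀]
  exact ⟨one_sub_sum_mul_le (ht0 y₀) hp (le_one_of_sum_eq_one hp hsum y₀) (ht1 y₀) (hρmax y₀),
    le_one_sub_sum_mul hp hsum (fun y hy => hT y₀ y hy.symm) (hρmin y₀)⟩

end ProbabilityVector

section Integration

variable {X : Type*} [MeasurableSpace X] {μ : Measure X}

theorem integrable_one_sub_iSup {Y : Type*} [Finite Y] [Nonempty Y] [IsFiniteMeasure μ]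
    {q : X → Y → ℝ} (hmeas : ∀ y, Measurable fun x => q x y) (h₀ : ∀ x y, 0 ≤ q x y)
    (h₁ : ∀ x y, q x y ≤ 1) : Integrable (fun x => 1 - ⨆ y, q x y) μ := by
  refine .of_bound (measurable_const.sub (.iSup hmeas)).aestronglyMeasurable 1
    (.of_forall fun x => ?_)
  obtain ⟨y⟩ := ‹Nonempty Y›
  have hbdd : BddAbove (Set.range (q x)) := (Set.finite_range _).bddAbove
  rw [Real.norm_eq_abs, abs_le]
  constructor <;> linarith [ciSup_le (h₁ x), le_ciSup_of_le hbdd y (h₀ x y)]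

variable [IsProbabilityMeasure μ]

theorem integral_const_add_mul {f : X → ℝ} (hf : Integrable f μ) (a b : ℝ) :
    ∫ x, (a + b * f x) ∂μ = a + b * ∫ x, f x ∂μ := by
  rw [integral_add (integrable_const a) (hf.const_mul b), integral_const, integral_const_mul,
    probReal_univ, one_smul]

theorem integral_add_const {f : X → ℝ} (hf : Integrable f μ) (a : ℝ) :
    ∫ x, (f x + a) ∂μ = ∫ x, f x ∂μ + a := by
  rw [integral_add hf (integrable_const a), integral_const, probReal_univ, one_smul]

end Integration

theorem ber_class_dependent_noise_sota_bounds_general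
    {X : Type*} [MeasurableSpace X] (μ : Measure X) [IsProbabilityMeasure μ]
    {Y : Type*} [Fintype Y] [Nonempty Y] [DecidableEq Y]
    (hne : ((Finset.univ : Finset (Y × Y)).filter fun p => p.1 ≠ p.2).Nonempty)
    (η : X → Y → ℝ)
    (hmeas : ∀ y, Measurable fun x => η x y)
    (hnn : ∀ x y, 0 ≤ η x y)
    (hsum : ∀ x, ∑ y, η x y = 1)
    (t : Y → Y → ℝ)
    (ht0 : ∀ y' y, 0 ≤ t y' y)
    (htsum : ∀ y, ∑ y', t y' y = 1)
    (ηρ : X → Y → ℝ)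
    (hηρ : ∀ x y', ηρ x y' = ∑ y, t y' y * η x y)
    (yx : X → Y)
    (hmax : ∀ᵐ x ∂μ, (∀ y, η x y ≤ η x (yx x)) ∧ ∀ y', ηρ x y' ≤ ηρ x (yx x))
    (Rstar Rρ : ℝ)
    (hR : Rstar = ∫ x, (1 - ⨆ y, η x y) ∂μ)
    (hRρ : Rρ = ∫ x, (1 - ⨆ y', ηρ x y') ∂μ)
    (s : ℝ) (hRs : Rstar ≤ s) :
    (1 - s) * (Finset.univ.inf' Finset.univ_nonempty fun y => 1 - t y y)
        - s * (((Finset.univ : Finset (Y × Y)).filter fun p => p.1 ≠ p.2).sup' hne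
            fun p => t p.1 p.2) ≤ Rρ
      ∧ Rρ ≤ s + (Finset.univ.sup' Finset.univ_nonempty fun y => 1 - t y y) := by
  set ρmin := univ.inf' univ_nonempty fun y => 1 - t y y
  set ρmax := univ.sup' univ_nonempty fun y => 1 - t y y
  set T := (univ.filter fun p : Y × Y => p.1 ≠ p.2).sup' hne fun p => t p.1 p.2
  have hρmin : ∀ y, ρmin ≤ 1 - t y y := fun y => inf'_le _ (mem_univ y)
  have hρmax : ∀ y, 1 - t y y ≤ ρmax := fun y => le_sup' (fun y => 1 - t y y) (mem_univ y)
  have hT : ∀ y' y, y' ≠ y → t y' y ≤ T := fun y' y h =>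
    le_sup' (fun p : Y × Y => t p.1 p.2) (mem_filter.2 ⟨mem_univ (y', y), h⟩)
  have ht1 : ∀ y' y, t y' y ≤ 1 := fun y' y => le_one_of_sum_eq_one (ht0 · y) (htsum y) y'
  have hη1 : ∀ x y, η x y ≤ 1 := fun x => le_one_of_sum_eq_one (hnn x) (hsum x)
  obtain rfl : ηρ = fun x y' => ∑ y, t y' y * η x y := funext fun x => funext (hηρ x)
  have hηρ0 : ∀ x y', 0 ≤ ∑ y, t y' y * η x y := fun x y' =>
    sum_nonneg fun y _ => mul_nonneg (ht0 y' y) (hnn x y)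
  have hηρ1 : ∀ x y', ∑ y, t y' y * η x y ≤ 1 := fun x =>
    le_one_of_sum_eq_one (hηρ0 x) (sum_sum_mul_eq_one htsum (hsum x))
  have hint := integrable_one_sub_iSup (μ := μ) hmeas hnn hη1
  have hintρ := integrable_one_sub_iSup (μ := μ) (by fun_prop) hηρ0 hηρ1
  have hae : ∀ᵐ x ∂μ, 1 - ⨆ y', ∑ y, t y' y * η x y ≤ (1 - ⨆ y, η x y) + ρmax ∧
      ρmin + (1 - T - ρmin) * (1 - ⨆ y, η x y) ≤ 1 - ⨆ y', ∑ y, t y' y * η x y :=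
    hmax.mono fun x ⟨hη, hηρ⟩ => one_sub_iSup_noisy_bounds (hnn x) (hsum x) ht0 (fun y => ht1 y y)
      hρmin hρmax hT hη hηρ
  have hupper : Rρ ≤ Rstar + ρmax := by
    rw [hRρ, hR, ← integral_add_const hint]
    exact integral_mono_ae hintρ (hint.add (integrable_const _)) (hae.mono fun _ h => h.1)
  have hlower : ρmin + (1 - T - ρmin) * Rstar ≤ Rρ := by
    rw [hRρ, hR, ← integral_const_add_mul hint]
    exact integral_mono_ae ((integrable_const _).add (hint.const_mul _)) hintρ
      (hae.mono fun _ h => h.2)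
  have hRstar0 : 0 ≤ Rstar := hR ▸ integral_nonneg fun x => sub_nonneg.2 (ciSup_le (hη1 x))
  have hρmin0 : 0 ≤ ρmin := le_inf' _ _ fun y _ => sub_nonneg.2 (ht1 y y)
  have hT0 : 0 ≤ T := hne.elim fun p hp => (ht0 p.1 p.2).trans (hT p.1 p.2 (mem_filter.1 hp).2)
  constructor <;> nlinarith [mul_nonneg (sub_nonneg.2 hRs) (add_nonneg hρmin0 hT0)]

/-- Bounds on the noisy Bayes error rate in terms of the state-of-the-art error `s`:
`(1 − s)·min_y ρ(y) − s·max_{y'≠y''} t_{y',y''} ≤ R*_ρ ≤ s + max_y ρ(y)`. -/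
theorem ber_class_dependent_noise_sota_bounds
    {X : Type*} [MeasurableSpace X] (μ : Measure X) [IsProbabilityMeasure μ]
    {Y : Type*} [Fintype Y] [Nonempty Y] [DecidableEq Y] [MeasurableSpace Y] [MeasurableSingletonClass Y]
    (hC : 2 ≤ Fintype.card Y)
    (hne : ((Finset.univ : Finset (Y × Y)).filter fun p => p.1 ≠ p.2).Nonempty)
    (η : X → Y → ℝ)
    (hmeas : ∀ y, Measurable fun x => η x y)
    (hnn : ∀ x y, 0 ≤ η x y)
    (hsum : ∀ x, ∑ y, η x y = 1)
    (t : Y → Y → ℝ)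
    (ht0 : ∀ y' y, 0 ≤ t y' y) (ht1 : ∀ y' y, t y' y ≤ 1)
    (htsum : ∀ y, ∑ y', t y' y = 1)
    (ηρ : X → Y → ℝ)
    (hηρ : ∀ x y', ηρ x y' = ∑ y, t y' y * η x y)
    (yx : X → Y) (hyx : Measurable yx)
    (hmax : ∀ᵐ x ∂μ, (∀ y, η x y ≤ η x (yx x)) ∧ ∀ y', ηρ x y' ≤ ηρ x (yx x))
    (Rstar Rρ : ℝ)
    (hR : Rstar = ∫ x, (1 - ⨆ y, η x y) ∂μ)
    (hRρ : Rρ = ∫ x, (1 - ⨆ y', ηρ x y') ∂μ)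
    (s : ℝ) (hs0 : 0 ≤ s) (hs1 : s ≤ 1) (hRs : Rstar ≤ s) :
    (1 - s) * (Finset.univ.inf' Finset.univ_nonempty fun y => 1 - t y y)
        - s * (((Finset.univ : Finset (Y × Y)).filter fun p => p.1 ≠ p.2).sup' hne
            fun p => t p.1 p.2) ≤ Rρ
      ∧ Rρ ≤ s + (Finset.univ.sup' Finset.univ_nonempty fun y => 1 - t y y) :=
  ber_class_dependent_noise_sota_bounds_general μ hne η hmeas hnn hsum t ht0 htsum ηρ hηρ yx hmax
    Rstar Rρ hR hRρ s hRs
end
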